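/- Let u ∈ U and let S = {u' ∈ U : θ_{u'} < θ_u} be the set of vertices with strictly smaller tip number. Then the number of butterflies containing u in the subgraph induced on (U \ S) ∪ V is at least θ_u. -/

import Mathlib

/-!
`u` lies in a `θ_u`-tip `H`, in which it has at least `θ_u` butterflies. Every vertex of `H`
lies in a `θ_u`-tip, so has tip number at least `θ_u`; hence `H` avoids `S`, and counting
butterflies is monotone in the induced vertex set.
-/

open Finset

variable {α β : Type*} [Fintype α] [Fintype β] [DecidableEq α] [DecidableEq β]

/-- Neighborhood (in the `V` side) of a `U`-side vertex, for bipartite adjacency `A`. -/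
def nbrU (A : α → β → Prop) [∀ u v, Decidable (A u v)] (u : α) : Finset β :=
  univ.filter (fun v => A u v)

/-- Neighborhood (in the `U` side) of a `V`-side vertex. -/
def nbrV (A : α → β → Prop) [∀ u v, Decidable (A u v)] (v : β) : Finset α :=
  univ.filter (fun u => A u v)

/-- A butterfly (2,2-biclique): a pair of a 2-subset of `U` and a 2-subset of `V`
with all four cross edges present. -/
def butterflies (A : α → β → Prop) [∀ u v, Decidable (A u v)] : Finset (Finset α × Finset β) :=
  univ.filter (fun p => p.1.card = 2 ∧ p.2.card = 2 ∧ ∀ u ∈ p.1, ∀ v ∈ p.2, A u v)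

/-- Number of butterflies containing the `U`-vertex `u`. -/
def btfCount (A : α → β → Prop) [∀ u v, Decidable (A u v)] (u : α) : ℕ :=
  ((butterflies A).filter (fun p => u ∈ p.1)).card

/-- Number of butterflies containing both `U`-vertices `u` and `u'`. -/
def btfCountPair (A : α → β → Prop) [∀ u v, Decidable (A u v)] (u u' : α) : ℕ :=
  ((butterflies A).filter (fun p => u ∈ p.1 ∧ u' ∈ p.1)).card

/-- Butterflies of the subgraph induced on `S ∪ V`. -/
def butterfliesIn (A : α → β → Prop) [∀ u v, Decidable (A u v)] (S : Finset α) :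
    Finset (Finset α × Finset β) :=
  (butterflies A).filter (fun p => p.1 ⊆ S)

/-- Number of butterflies containing `u` in the subgraph induced on `S ∪ V`. -/
def btfCountIn (A : α → β → Prop) [∀ u v, Decidable (A u v)] (S : Finset α) (u : α) : ℕ :=
  ((butterfliesIn A S).filter (fun p => u ∈ p.1)).card

/-- Wedges with both endpoints in `U`: a 2-subset of `U` together with a common neighbor. -/
def wedges (A : α → β → Prop) [∀ u v, Decidable (A u v)] : Finset (Finset α × β) :=
  univ.filter (fun p => p.1.card = 2 ∧ ∀ u ∈ p.1, A u p.2)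

/-- Two `U`-vertices are connected by a series of butterflies within the subgraph induced
on `S ∪ V`. -/
def btfConnected (A : α → β → Prop) [∀ u v, Decidable (A u v)] (S : Finset α) : α → α → Prop :=
  Relation.ReflTransGen (fun a b => ∃ p ∈ butterfliesIn A S, a ∈ p.1 ∧ b ∈ p.1)

/-- The two defining conditions of a `k`-tip (before maximality): every vertex of `S` has at
least `k` butterflies in the induced subgraph, and `S` is butterfly-connected. -/
def tipCond (A : α → β → Prop) [∀ u v, Decidable (A u v)] (k : ℕ) (S : Finset α) : Prop :=
  (∀ u ∈ S, k ≤ btfCountIn A S u) ∧ ∀ u1 ∈ S, ∀ u2 ∈ S, btfConnected A S u1 u2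

/-- A `k`-tip: a maximal set satisfying the `k`-tip conditions. -/
def kTip (A : α → β → Prop) [∀ u v, Decidable (A u v)] (k : ℕ) (S : Finset α) : Prop :=
  tipCond A k S ∧ ∀ S', S ⊆ S' → tipCond A k S' → S' = S

/-- The tip number of `u`: the largest `k` such that `u` lies in some `k`-tip. -/
noncomputable def tipNumber (A : α → β → Prop) [∀ u v, Decidable (A u v)] (u : α) : ℕ :=
  sSup {k : ℕ | ∃ S, kTip A k S ∧ u ∈ S}

section TipNumber

variable (A : α → β → Prop) [∀ u v, Decidable (A u v)]

lemma btfCountIn_mono {S T : Finset α} (hST : S ⊆ T) (u : α) :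
    btfCountIn A S u ≤ btfCountIn A T u := by
  refine card_le_card fun p hp => ?_
  simp only [butterfliesIn, mem_filter] at hp ⊢
  exact ⟨⟨hp.1.1, hp.1.2.trans hST⟩, hp.2⟩

lemma bddAbove_tipLevels (u : α) : BddAbove {k : ℕ | ∃ S, kTip A k S ∧ u ∈ S} :=
  ⟨btfCountIn A univ u, fun _ ⟨S, hS, hu⟩ =>
    (hS.1.1 u hu).trans (btfCountIn_mono A (subset_univ S) u)⟩

lemma le_tipNumber_of_kTip {k : ℕ} {S : Finset α} (hS : kTip A k S) {u : α} (hu : u ∈ S) :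
    k ≤ tipNumber A u :=
  le_csSup (bddAbove_tipLevels A u) ⟨S, hS, hu⟩

lemma exists_kTip_tipNumber {u : α} (hu : 0 < tipNumber A u) :
    ∃ S, kTip A (tipNumber A u) S ∧ u ∈ S :=
  Nat.sSup_mem (Set.nonempty_iff_ne_empty.2 fun h => by simp [tipNumber, h] at hu)
    (bddAbove_tipLevels A u)

end TipNumber

/-- with `S` the set of vertices of strictly smaller tip number than `u`,
the butterfly count of `u` in the subgraph induced on `(U \\ S) ∪ V` is at least `θ_u`. -/
theorem stmt16 (A : α → β → Prop) [∀ u v, Decidable (A u v)] (u : α) :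
    tipNumber A u ≤
      btfCountIn A
        (univ \ (univ.filter (fun u' => tipNumber A u' < tipNumber A u))) u := by
  rcases (tipNumber A u).eq_zero_or_pos with hzero | hpos
  · simp [hzero]
  obtain ⟨H, hH, huH⟩ := exists_kTip_tipNumber A hpos
  have hH_avoids : H ⊆ univ \ univ.filter (fun u' => tipNumber A u' < tipNumber A u) :=
    fun u' hu' => by simpa using le_tipNumber_of_kTip A hH hu'
  exact (hH.1.1 u huH).trans (btfCountIn_mono A hH_avoids u)
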